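/- For every area sequence w, bounce(w) = area(ψ(w)). -/

import Mathlib

/-- The `i`-th letter of the word `w` (`1`-indexed, as in the paper);
defaults to `0` out of range. -/
def get1 (w : List ℕ) (i : ℕ) : ℕ := w.getD (i - 1) 0

/-- `w` is the area sequence of a Dyck path: the first letter is `0` and each
letter exceeds the previous one by at most one. -/
def IsAreaSeq (w : List ℕ) : Prop :=
  (w ≠ [] → get1 w 1 = 0) ∧ ∀ i, 1 ≤ i → i < w.length → get1 w (i + 1) ≤ get1 w i + 1

/-- Insertion at position `i` (for `0 ≤ i ≤ n`): `ins w 0` prepends a `0`, and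
for `1 ≤ i ≤ n`, `ins w i` inserts the letter `w_i + 1` just after position `i`. -/
def ins (w : List ℕ) (i : ℕ) : List ℕ :=
  w.take i ++ (if i = 0 then 0 else get1 w i + 1) :: w.drop i

/-- The area statistic: the sum of the letters. -/
def area (w : List ℕ) : ℕ := w.sum

/-- The dinv statistic: `dinv w = Σ_i d_i` where `d_i` is the number of `j > i`
with `w_j = w_i` or `w_j = w_i - 1`. -/
def dinv (w : List ℕ) : ℕ :=
  ∑ i ∈ Finset.Icc 1 w.length,
    ((Finset.Ioc i w.length).filter
      (fun j => get1 w j = get1 w i ∨ get1 w j + 1 = get1 w i)).card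

/-- The maximal value of a word (`0` for the empty word). -/
def maxVal (w : List ℕ) : ℕ := w.foldr max 0

/-- Positions of the letters of maximal value `m`. -/
def Maxb (w : List ℕ) : Finset ℕ :=
  (Finset.Icc 1 w.length).filter (fun i => get1 w i = maxVal w)

/-- Positions `i` with `w_i = m - 1` such that all letters after position `i`
are `< m`. -/
def Maxa (w : List ℕ) : Finset ℕ :=
  (Finset.Icc 1 w.length).filter (fun i =>
    get1 w i + 1 = maxVal w ∧ ∀ j ∈ Finset.Ioc i w.length, get1 w j < maxVal w)

/-- The position of the leftmost letter equal to the maximal value `m` in the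
rightmost block of consecutive letters equal to `m`. -/
def i0 (w : List ℕ) : ℕ :=
  ((Finset.Icc 1 w.length).filter (fun i =>
    get1 w i = maxVal w ∧ (i = 1 ∨ get1 w (i - 1) ≠ maxVal w))).sup id

/-- The admissible insertion positions of `w`, listed in admissible order:
the elements of `Maxb w` in decreasing order, then the elements of `Maxa w`
in decreasing order, then `i0 w - 1`.  The empty word has the single
admissible insertion position `0`. -/
def admissible (w : List ℕ) : List ℕ :=
  if w = [] then [0]
  else ((Maxb w).sort (· ≤ ·)).reverse ++ ((Maxa w).sort (· ≤ ·)).reverse ++ [i0 w - 1]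

/-- Auxiliary version of the map `ψ`, reading the reversed word. -/
def psiRev : List ℕ → List ℕ
  | [] => []
  | a :: u => ins (psiRev u) ((admissible (psiRev u)).getD a 0)

/-- The map `ψ`: `ψ(ε) = ε` and `ψ(u a) = ins_{c_a}(ψ(u))` where
`c_0, c_1, …, c_k` are the admissible insertion positions of `ψ(u)` in
admissible order. -/
def psi (w : List ℕ) : List ℕ := psiRev w.reverse

/-- The bounce sequence: `b_1 = 0`, and `b_i = b_{i-1} + 1` if
`b_{i-1} + 1 ≤ w_i`, otherwise `b_i = 0`. -/
def bseq (w : List ℕ) : ℕ → ℕ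
  | 0 => 0
  | 1 => 0
  | (i + 2) => if bseq w (i + 1) + 1 ≤ get1 w (i + 2) then bseq w (i + 1) + 1 else 0

/-- The bounces of `w`: positions `1 < i ≤ n` with `b_i = 0`. -/
def bounces (w : List ℕ) : Finset ℕ :=
  (Finset.Icc 2 w.length).filter (fun i => bseq w i = 0)

/-- The bounce statistic: the sum of the reversed positions `n - i + 1` of the
bounces of `w`. -/
def bounce (w : List ℕ) : ℕ := ∑ i ∈ bounces w, (w.length - i + 1)

/-!
Induct on `w`, appending one letter at a time. For a nonempty area sequence `u` of length `n`
whose bounce sequence ends with `b_n`, the word `v = ψ(u)` is an area sequence whose maximum `m`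
is the number of bounces of `u`, with `|Maxb v| = b_n + 1` and `|Maxa v| = u_n - b_n`
(`PsiInvariant`). Appending a letter `a ≤ u_n + 1` creates a new bounce exactly when `a ≤ b_n`,
i.e. when `c_a ∈ Maxb v`; inserting there creates a new maximum `m + 1`. Otherwise `c_a` is in
`Maxa v` or is `i_0 - 1`, and the inserted letter is `m`. Either way the inserted letter is the new
number of bounces, which is also the increase of `bounce`, and the sizes of the new `Maxb` and
`Maxa` are read off from the positions of `c_a` in the admissible order.
-/

lemma sort_reverse_getD_mem (s : Finset ℕ) {a : ℕ} (ha : a < s.card) :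
    (s.sort (· ≤ ·)).reverse.getD a 0 ∈ s := by
  rw [← Finset.mem_sort (· ≤ ·), List.getD_eq_getElem _ _ (by simpa using ha)]
  exact List.mem_reverse.mp (List.getElem_mem _)

/-- `(s.sort (· ≤ ·)).reverse.getD a 0` is the `a`-th largest element of `s`, counting
from `0`. -/
lemma card_filter_lt_sort_reverse_getD (s : Finset ℕ) {a : ℕ} (ha : a < s.card) :
    (s.filter ((s.sort (· ≤ ·)).reverse.getD a 0 < ·)).card = a := by
  set f := s.orderEmbOfFin rfl
  set j : Fin s.card := ⟨s.card - 1 - a, by omega⟩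
  have hc : (s.sort (· ≤ ·)).reverse.getD a 0 = f j := by
    rw [List.getD_eq_getElem _ _ (by simpa using ha), List.getElem_reverse,
      Finset.orderEmbOfFin_apply]
    simp [j]
  have himage : s.filter (f j < ·) = (Finset.Ioi j).map f.toEmbedding := by
    ext x
    simp only [Finset.mem_filter, Finset.mem_map, Finset.mem_Ioi, RelEmbedding.coe_toEmbedding]
    constructor
    · rintro ⟨hx, hjx⟩
      obtain ⟨i, rfl⟩ : x ∈ Set.range f := by rwa [Finset.range_orderEmbOfFin]
      exact ⟨i, f.lt_iff_lt.mp hjx, rfl⟩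
    · rintro ⟨i, hji, rfl⟩
      exact ⟨Finset.orderEmbOfFin_mem s rfl i, f.lt_iff_lt.mpr hji⟩
  rw [hc, himage, Finset.card_map, Fin.card_Ioi]
  simp [j]
  omega

lemma get1_eq_getElem {w : List ℕ} {i : ℕ} (h1 : 1 ≤ i) (h2 : i ≤ w.length) :
    get1 w i = w[i - 1] := by
  simp [get1, List.getD_eq_getElem?_getD, List.getElem?_eq_getElem (by omega : i - 1 < w.length)]

lemma get1_mem {w : List ℕ} {i : ℕ} (h1 : 1 ≤ i) (h2 : i ≤ w.length) : get1 w i ∈ w := by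
  rw [get1_eq_getElem h1 h2]
  exact List.getElem_mem _

lemma get1_append_singleton_of_le {u : List ℕ} {i : ℕ} (x : ℕ) (h1 : 1 ≤ i)
    (h2 : i ≤ u.length) :
    get1 (u ++ [x]) i = get1 u i := by
  rw [get1_eq_getElem h1 (by simp; omega), get1_eq_getElem h1 h2, List.getElem_append_left]

lemma get1_append_singleton_length (u : List ℕ) (x : ℕ) :
    get1 (u ++ [x]) (u.length + 1) = x := by
  simp [get1]

section MaxVal

variable {w : List ℕ}

lemma le_maxVal {x : ℕ} (h : x ∈ w) : x ≤ maxVal w := List.le_max_of_le' 0 h le_rfl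

lemma get1_le_maxVal {i : ℕ} (h1 : 1 ≤ i) (h2 : i ≤ w.length) : get1 w i ≤ maxVal w :=
  le_maxVal (get1_mem h1 h2)

lemma maxVal_mem (h : w ≠ []) : maxVal w ∈ w :=
  List.maximum_mem (List.foldr_max_of_ne_nil h).symm

lemma List.Perm.maxVal_eq {w' : List ℕ} (h : w.Perm w') : maxVal w = maxVal w' :=
  h.foldr_op_eq

lemma exists_get1_eq_maxVal (h : w ≠ []) :
    ∃ i, 1 ≤ i ∧ i ≤ w.length ∧ get1 w i = maxVal w := by
  obtain ⟨k, hk, hval⟩ := List.mem_iff_getElem.mp (maxVal_mem h)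
  refine ⟨k + 1, by omega, by omega, ?_⟩
  rw [get1_eq_getElem (by omega) (by omega)]
  simpa using hval

end MaxVal

lemma card_filter_get1 (w : List ℕ) (P : ℕ → Prop) [DecidablePred P] :
    ((Finset.Icc 1 w.length).filter (fun i => P (get1 w i))).card = w.countP (P ·) := by
  induction w using List.reverseRecOn with
  | nil => simp
  | append_singleton u x ih =>
    have hsame : (Finset.Icc 1 u.length).filter (fun i => P (get1 (u ++ [x]) i))
        = (Finset.Icc 1 u.length).filter (fun i => P (get1 u i)) :=
      Finset.filter_congr fun i hi => by
        rw [Finset.mem_Icc] at hi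
        rw [get1_append_singleton_of_le x hi.1 hi.2]
    rw [List.length_append, List.length_singleton,
      ← Finset.insert_Icc_right_eq_Icc_add_one (by omega), Finset.filter_insert,
      get1_append_singleton_length, List.countP_append, hsame, ← ih]
    split_ifs with hx
    · rw [Finset.card_insert_of_notMem (by simp)]
      simp [hx]
    · simp [hx]

def insLetter (w : List ℕ) (i : ℕ) : ℕ := if i = 0 then 0 else get1 w i + 1

section Ins

variable {v : List ℕ} {c : ℕ}

lemma ins_eq (v : List ℕ) (c : ℕ) : ins v c = v.take c ++ insLetter v c :: v.drop c := rfl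

lemma ins_perm (v : List ℕ) (c : ℕ) : (ins v c).Perm (insLetter v c :: v) := by
  simpa only [ins_eq, List.take_append_drop] using
    (List.perm_middle : (v.take c ++ insLetter v c :: v.drop c).Perm _)

lemma length_ins (hc : c ≤ v.length) : (ins v c).length = v.length + 1 := by
  simp [ins]; omega

lemma area_ins (v : List ℕ) (c : ℕ) : area (ins v c) = area v + insLetter v c := by
  rw [area, area, (ins_perm v c).sum_eq, List.sum_cons, add_comm]

lemma maxVal_ins (v : List ℕ) (c : ℕ) : maxVal (ins v c) = max (insLetter v c) (maxVal v) :=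
  (ins_perm v c).maxVal_eq

lemma get1_ins_of_le {j : ℕ} (hc : c ≤ v.length) (h1 : 1 ≤ j) (h2 : j ≤ c) :
    get1 (ins v c) j = get1 v j := by
  rw [get1_eq_getElem h1 (by rw [length_ins hc]; omega), get1_eq_getElem h1 (by omega)]
  simp only [ins_eq]
  rw [List.getElem_append_left (by simp; omega), List.getElem_take]

lemma get1_ins_succ (hc : c ≤ v.length) : get1 (ins v c) (c + 1) = insLetter v c := by
  rw [get1_eq_getElem (by omega) (by rw [length_ins hc]; omega)]
  simp only [ins_eq]
  rw [List.getElem_append_right (by simp)]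
  simp [Nat.min_eq_left hc]

lemma get1_ins_of_lt {j : ℕ} (hc : c ≤ v.length) (h1 : c + 1 < j) (h2 : j ≤ v.length + 1) :
    get1 (ins v c) j = get1 v (j - 1) := by
  rw [get1_eq_getElem (by omega) (by rw [length_ins hc]; omega),
    get1_eq_getElem (by omega) (by omega)]
  simp only [ins_eq]
  rw [List.getElem_append_right (by simp; omega)]
  have hidx : j - 1 - (v.take c).length = (j - 2 - c) + 1 := by simp; omega
  simp only [hidx, List.getElem_cons_succ, List.getElem_drop]
  congr 1
  omega

end Ins

section IsAreaSeq

variable {u v : List ℕ} {c x : ℕ}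

lemma isAreaSeq_ins (h : IsAreaSeq v) (hc : c ≤ v.length) : IsAreaSeq (ins v c) := by
  obtain ⟨hfirst, hstep⟩ := h
  refine ⟨fun _ => ?_, fun i hi1 hi2 => ?_⟩
  · rcases Nat.eq_zero_or_pos c with rfl | hcpos
    · simpa [insLetter] using get1_ins_succ (v := v) hc
    · rw [get1_ins_of_le hc le_rfl hcpos]
      exact hfirst (List.ne_nil_of_length_pos (by omega))
  rw [length_ins hc] at hi2
  rcases lt_trichotomy i c with hlt | rfl | hgt
  · rw [get1_ins_of_le hc (by omega) hlt, get1_ins_of_le hc hi1 hlt.le]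
    exact hstep i hi1 (by omega)
  · rw [get1_ins_succ hc, get1_ins_of_le hc hi1 le_rfl, insLetter, if_neg (by omega)]
  rw [get1_ins_of_lt hc (by omega) (by omega)]
  rcases (show c + 1 ≤ i by omega).eq_or_lt with rfl | hgt'
  · rw [get1_ins_succ hc, Nat.add_sub_cancel, insLetter]
    split_ifs with hc0
    · subst hc0
      simp [hfirst (List.ne_nil_of_length_pos (by omega))]
    · have := hstep c (by omega) (by omega)
      omega
  · rw [get1_ins_of_lt hc hgt' (by omega)]
    have := hstep (i - 1) (by omega) (by omega)
    rwa [Nat.sub_add_cancel (by omega)] at this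

lemma IsAreaSeq.of_append_singleton (h : IsAreaSeq (u ++ [x])) : IsAreaSeq u := by
  refine ⟨fun hu => ?_, fun i hi1 hi2 => ?_⟩
  · rw [← get1_append_singleton_of_le x le_rfl (List.length_pos_iff.mpr hu)]
    exact h.1 (by simp)
  · rw [← get1_append_singleton_of_le x (by omega) (by omega),
      ← get1_append_singleton_of_le x hi1 (by omega)]
    exact h.2 i hi1 (by simp; omega)

lemma IsAreaSeq.le_succ_of_append_singleton (h : IsAreaSeq (u ++ [x])) (hu : u ≠ []) :
    x ≤ get1 u u.length + 1 := by
  have := h.2 u.length (List.length_pos_iff.mpr hu) (by simp)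
  rwa [get1_append_singleton_length,
    get1_append_singleton_of_le x (List.length_pos_iff.mpr hu) le_rfl] at this

end IsAreaSeq

section Maximal

variable {v : List ℕ} {c : ℕ}

lemma mem_Maxb {i : ℕ} : i ∈ Maxb v ↔ 1 ≤ i ∧ i ≤ v.length ∧ get1 v i = maxVal v := by
  simp [Maxb, and_assoc]

lemma mem_Maxa {i : ℕ} :
    i ∈ Maxa v ↔ 1 ≤ i ∧ i ≤ v.length ∧ get1 v i + 1 = maxVal v ∧
      ∀ j, i < j → j ≤ v.length → get1 v j < maxVal v := by
  simp [Maxa, and_assoc]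

lemma card_Maxb_eq_countP (v : List ℕ) : (Maxb v).card = v.countP (· = maxVal v) :=
  card_filter_get1 v (· = maxVal v)

lemma Maxa_eq_empty_of_maxVal_eq_zero (h : maxVal v = 0) : Maxa v = ∅ :=
  Finset.filter_eq_empty_iff.mpr fun _ _ => by omega

lemma card_Maxb_ins_of_insLetter_eq (h : insLetter v c = maxVal v) :
    (Maxb (ins v c)).card = (Maxb v).card + 1 := by
  have hmax : maxVal (ins v c) = maxVal v := by rw [maxVal_ins, h, max_self]
  rw [card_Maxb_eq_countP, card_Maxb_eq_countP, (ins_perm v c).countP_eq, List.countP_cons, hmax]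
  simp [h]

lemma card_Maxb_ins_of_insLetter_eq_succ (h : insLetter v c = maxVal v + 1) :
    (Maxb (ins v c)).card = 1 := by
  have hmax : maxVal (ins v c) = maxVal v + 1 := by rw [maxVal_ins, h]; omega
  rw [card_Maxb_eq_countP, (ins_perm v c).countP_eq, List.countP_cons, hmax,
    List.countP_eq_zero.mpr fun x hx => by have := le_maxVal hx; simp; omega]
  simp [h]

lemma Maxa_ins (hc1 : 1 ≤ c) (hc2 : c ≤ v.length) (hmax : maxVal (ins v c) = get1 v c + 1) :
    Maxa (ins v c) = ((Finset.Icc 1 v.length).filter (fun i => c < i ∧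
      get1 v i + 1 = maxVal (ins v c) ∧
        ∀ j ∈ Finset.Ioc i v.length, get1 v j < maxVal (ins v c))).image (· + 1) := by
  have hnew : get1 (ins v c) (c + 1) = maxVal (ins v c) := by
    rw [get1_ins_succ hc2, hmax, insLetter, if_neg (by omega)]
  ext j
  simp only [mem_Maxa, length_ins hc2, Finset.mem_image, Finset.mem_filter, Finset.mem_Icc,
    Finset.mem_Ioc]
  constructor
  · rintro ⟨hj1, hj2, hjval, hjsuf⟩
    have hjgt : c + 1 < j := by
      by_contra hle
      rcases (show j ≤ c + 1 by omega).eq_or_lt with rfl | hlt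
      · omega
      · have := hjsuf (c + 1) hlt (by omega)
        omega
    refine ⟨j - 1, ⟨⟨by omega, by omega⟩, by omega, ?_, fun k hk => ?_⟩, by omega⟩
    · rwa [← get1_ins_of_lt hc2 hjgt (by omega)]
    · have := hjsuf (k + 1) (by omega) (by omega)
      rwa [get1_ins_of_lt hc2 (by omega) (by omega), Nat.add_sub_cancel] at this
  · rintro ⟨i, ⟨⟨hi1, hi2⟩, hci, hival, hisuf⟩, rfl⟩
    refine ⟨by omega, by omega, ?_, fun k hk1 hk2 => ?_⟩
    · rwa [get1_ins_of_lt hc2 (by omega) (by omega), Nat.add_sub_cancel]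
    · rw [get1_ins_of_lt hc2 (by omega) (by omega)]
      exact hisuf (k - 1) ⟨by omega, by omega⟩

lemma Maxa_ins_of_mem_Maxb (hc : c ∈ Maxb v) :
    Maxa (ins v c) = ((Maxb v).filter (c < ·)).image (· + 1) := by
  obtain ⟨hc1, hc2, hcval⟩ := mem_Maxb.mp hc
  have hmax : maxVal (ins v c) = maxVal v + 1 := by
    rw [maxVal_ins, insLetter, if_neg (by omega), hcval]; omega
  rw [Maxa_ins hc1 hc2 (by rw [hmax, hcval])]
  congr 1
  ext i
  simp only [Finset.mem_filter, Finset.mem_Icc, Finset.mem_Ioc, mem_Maxb, hmax]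
  constructor
  · rintro ⟨hi, hci, hival, -⟩
    exact ⟨⟨hi.1, hi.2, by omega⟩, hci⟩
  · rintro ⟨⟨hi1, hi2, hival⟩, hci⟩
    exact ⟨⟨hi1, hi2⟩, hci, by omega,
      fun j hj => Nat.lt_succ_of_le (get1_le_maxVal (by omega) hj.2)⟩

lemma Maxa_ins_of_succ_eq_maxVal (hc1 : 1 ≤ c) (hc2 : c ≤ v.length)
    (hcval : get1 v c + 1 = maxVal v) :
    Maxa (ins v c) = ((Maxa v).filter (c < ·)).image (· + 1) := by
  have hmax : maxVal (ins v c) = maxVal v := by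
    rw [maxVal_ins, insLetter, if_neg (by omega), hcval, max_self]
  rw [Maxa_ins hc1 hc2 (by rw [hmax, hcval])]
  congr 1
  ext i
  simp only [Finset.mem_filter, Finset.mem_Icc, Finset.mem_Ioc, mem_Maxa, hmax]
  tauto

end Maximal

/-- The admissible insertion position `c_a` of `v`. -/
def admPos (v : List ℕ) (a : ℕ) : ℕ := (admissible v).getD a 0

section Admissible

variable {v : List ℕ} {a : ℕ}

lemma i0_le_length (v : List ℕ) : i0 v ≤ v.length :=
  Finset.sup_le fun _ hi => (Finset.mem_Icc.mp (Finset.mem_filter.mp hi).1).2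

lemma i0_spec (hv : v ≠ []) :
    1 ≤ i0 v ∧ get1 v (i0 v) = maxVal v ∧ (i0 v = 1 ∨ get1 v (i0 v - 1) ≠ maxVal v) := by
  set S := (Finset.Icc 1 v.length).filter (fun i =>
    get1 v i = maxVal v ∧ (i = 1 ∨ get1 v (i - 1) ≠ maxVal v))
  have hS : S.Nonempty := by
    have hex := exists_get1_eq_maxVal hv
    have hfind := Nat.find_spec hex
    refine ⟨Nat.find hex, Finset.mem_filter.mpr ⟨Finset.mem_Icc.mpr ⟨hfind.1, hfind.2.1⟩,
      hfind.2.2, ?_⟩⟩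
    by_contra! hcon
    exact Nat.find_min hex (by omega : Nat.find hex - 1 < Nat.find hex)
      ⟨by omega, by omega, hcon.2⟩
  obtain ⟨i, hiS, hisup⟩ := Finset.exists_mem_eq_sup S hS id
  obtain ⟨hi, hival, hileft⟩ := Finset.mem_filter.mp hiS
  have hi0 : i0 v = i := hisup
  exact hi0 ▸ ⟨(Finset.mem_Icc.mp hi).1, hival, hileft⟩

lemma admPos_le_length (v : List ℕ) (a : ℕ) : admPos v a ≤ v.length := by
  rw [admPos, List.getD_eq_getElem?_getD]
  rcases h : (admissible v)[a]? with _ | x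
  · simp
  have hx : x ∈ admissible v := List.mem_of_getElem? h
  rw [Option.getD_some]
  unfold admissible at hx
  split_ifs at hx with hv
  · simp_all
  simp only [List.mem_append, List.mem_reverse, Finset.mem_sort, List.mem_singleton] at hx
  rcases hx with (hx | hx) | rfl
  · exact (mem_Maxb.mp hx).2.1
  · exact (mem_Maxa.mp hx).2.1
  · exact (Nat.sub_le _ _).trans (i0_le_length v)

lemma admPos_of_lt_card_Maxb (hv : v ≠ []) (ha : a < (Maxb v).card) :
    admPos v a = ((Maxb v).sort (· ≤ ·)).reverse.getD a 0 := by
  rw [admPos, admissible, if_neg hv, List.append_assoc, List.getD_append _ _ _ _ (by simpa)]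

lemma admPos_of_card_Maxb_le (hv : v ≠ []) (ha1 : (Maxb v).card ≤ a)
    (ha2 : a < (Maxb v).card + (Maxa v).card) :
    admPos v a = ((Maxa v).sort (· ≤ ·)).reverse.getD (a - (Maxb v).card) 0 := by
  rw [admPos, admissible, if_neg hv, List.append_assoc, List.getD_append_right _ _ _ _ (by simpa),
    List.getD_append _ _ _ _ (by simp; omega)]
  simp

lemma admPos_card_Maxb_add_card_Maxa (hv : v ≠ []) :
    admPos v ((Maxb v).card + (Maxa v).card) = i0 v - 1 := by
  rw [admPos, admissible, if_neg hv, List.append_assoc, List.getD_append_right _ _ _ _ (by simp),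
    List.getD_append_right _ _ _ _ (by simp)]
  simp

end Admissible

section InsAdmPos

variable {v : List ℕ} {a : ℕ}

lemma ins_admPos_of_lt_card_Maxb (hv : v ≠ []) (ha : a < (Maxb v).card) :
    insLetter v (admPos v a) = maxVal v + 1 ∧ (Maxa (ins v (admPos v a))).card = a := by
  have hc := admPos_of_lt_card_Maxb hv ha
  have hmem : admPos v a ∈ Maxb v := hc ▸ sort_reverse_getD_mem _ ha
  obtain ⟨hc1, -, hcval⟩ := mem_Maxb.mp hmem
  refine ⟨by rw [insLetter, if_neg (by omega), hcval], ?_⟩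
  rw [Maxa_ins_of_mem_Maxb hmem, Finset.card_image_of_injective _ (add_left_injective 1), hc,
    card_filter_lt_sort_reverse_getD _ ha]

lemma ins_admPos_of_card_Maxb_le_of_lt (hv : v ≠ []) (ha1 : (Maxb v).card ≤ a)
    (ha2 : a < (Maxb v).card + (Maxa v).card) :
    insLetter v (admPos v a) = maxVal v ∧
      (Maxa (ins v (admPos v a))).card = a - (Maxb v).card := by
  have hc := admPos_of_card_Maxb_le hv ha1 ha2
  have ha : a - (Maxb v).card < (Maxa v).card := by omega
  have hmem : admPos v a ∈ Maxa v := hc ▸ sort_reverse_getD_mem _ ha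
  obtain ⟨hc1, hc2, hcval, -⟩ := mem_Maxa.mp hmem
  refine ⟨by rw [insLetter, if_neg (by omega), hcval], ?_⟩
  rw [Maxa_ins_of_succ_eq_maxVal hc1 hc2 hcval,
    Finset.card_image_of_injective _ (add_left_injective 1), hc,
    card_filter_lt_sort_reverse_getD _ ha]

lemma ins_admPos_card_Maxb_add_card_Maxa (h : IsAreaSeq v) (hv : v ≠ []) :
    insLetter v (admPos v ((Maxb v).card + (Maxa v).card)) = maxVal v ∧
      (Maxa (ins v (admPos v ((Maxb v).card + (Maxa v).card)))).card = (Maxa v).card := by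
  rw [admPos_card_Maxb_add_card_Maxa hv]
  obtain ⟨ht1, htval, htleft⟩ := i0_spec hv
  rcases (show i0 v = 1 ∨ 2 ≤ i0 v by omega) with ht | ht
  · have hm : maxVal v = 0 := by rw [← htval, ht]; exact h.1 hv
    have hm' : maxVal (ins v 0) = 0 := by rw [maxVal_ins, hm]; rfl
    rw [ht, Maxa_eq_empty_of_maxVal_eq_zero hm, Maxa_eq_empty_of_maxVal_eq_zero hm']
    simp [insLetter, hm]
  have htne := htleft.resolve_left (by omega)
  have hc1 : 1 ≤ i0 v - 1 := by omega
  have hc2 : i0 v - 1 ≤ v.length := (Nat.sub_le _ _).trans (i0_le_length v)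
  have hcval : get1 v (i0 v - 1) + 1 = maxVal v := by
    have hstep := h.2 (i0 v - 1) hc1 (by have := i0_le_length v; omega)
    rw [Nat.sub_add_cancel (by omega), htval] at hstep
    have := get1_le_maxVal hc1 hc2
    omega
  have hMaxa : (Maxa v).filter (i0 v - 1 < ·) = Maxa v := by
    refine Finset.filter_true_of_mem fun i hi => ?_
    obtain ⟨-, -, -, hisuf⟩ := mem_Maxa.mp hi
    by_contra hle
    have := hisuf (i0 v) (by omega) (i0_le_length v)
    omega
  refine ⟨by rw [insLetter, if_neg (by omega), hcval], ?_⟩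
  rw [Maxa_ins_of_succ_eq_maxVal hc1 hc2 hcval, hMaxa,
    Finset.card_image_of_injective _ (add_left_injective 1)]

lemma ins_admPos_of_card_Maxb_le (h : IsAreaSeq v) (hv : v ≠ []) (ha1 : (Maxb v).card ≤ a)
    (ha2 : a ≤ (Maxb v).card + (Maxa v).card) :
    insLetter v (admPos v a) = maxVal v ∧
      (Maxa (ins v (admPos v a))).card = a - (Maxb v).card := by
  rcases ha2.lt_or_eq with ha2 | rfl
  · exact ins_admPos_of_card_Maxb_le_of_lt hv ha1 ha2
  · simpa using ins_admPos_card_Maxb_add_card_Maxa h hv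

end InsAdmPos

section Bounce

variable {u : List ℕ}

lemma mem_bounces {i : ℕ} : i ∈ bounces u ↔ 2 ≤ i ∧ i ≤ u.length ∧ bseq u i = 0 := by
  simp [bounces, and_assoc]

lemma bseq_append_singleton_of_le {i : ℕ} (x : ℕ) (h : i ≤ u.length) :
    bseq (u ++ [x]) i = bseq u i := by
  induction i with
  | zero => rfl
  | succ i ih =>
    rcases i with _ | i
    · rfl
    · rw [bseq, bseq, ih (by omega), get1_append_singleton_of_le x (by omega) h]

lemma bseq_append_singleton_length (x : ℕ) (hu : u ≠ []) :
    bseq (u ++ [x]) (u.length + 1) =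
      if bseq u u.length + 1 ≤ x then bseq u u.length + 1 else 0 := by
  obtain ⟨k, hk⟩ : ∃ k, u.length = k + 1 :=
    Nat.exists_eq_succ_of_ne_zero (List.length_pos_iff.mpr hu).ne'
  rw [hk, bseq, bseq_append_singleton_of_le x (by omega), ← hk,
    show k + 2 = u.length + 1 by omega, get1_append_singleton_length]

lemma bounces_append_singleton (x : ℕ) (hu : u ≠ []) :
    bounces (u ++ [x]) = if bseq (u ++ [x]) (u.length + 1) = 0
      then insert (u.length + 1) (bounces u) else bounces u := by
  have hcongr : (Finset.Icc 2 u.length).filter (fun i => bseq (u ++ [x]) i = 0) = bounces u :=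
    Finset.filter_congr fun i hi => by rw [bseq_append_singleton_of_le x (Finset.mem_Icc.mp hi).2]
  rw [bounces, List.length_append, List.length_singleton,
    ← Finset.insert_Icc_right_eq_Icc_add_one (by have := List.length_pos_iff.mpr hu; omega),
    Finset.filter_insert, hcongr]

lemma length_succ_notMem_bounces (u : List ℕ) : u.length + 1 ∉ bounces u := by
  simp [mem_bounces]

lemma card_bounces_append_singleton (x : ℕ) (hu : u ≠ []) :
    (bounces (u ++ [x])).card =
      (bounces u).card + if bseq u u.length + 1 ≤ x then 0 else 1 := by
  rw [bounces_append_singleton x hu, bseq_append_singleton_length x hu]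
  by_cases hx : bseq u u.length + 1 ≤ x
  · simp [hx]
  · simp [hx, Finset.card_insert_of_notMem (length_succ_notMem_bounces u)]

/-- Appending a letter moves every bounce one step further from the end, and a new bounce at
the last position contributes `1`. -/
lemma bounce_append_singleton (x : ℕ) (hu : u ≠ []) :
    bounce (u ++ [x]) = bounce u + (bounces (u ++ [x])).card := by
  have hold : ∑ i ∈ bounces u, (u.length + 1 - i) = bounce u :=
    Finset.sum_congr rfl fun i hi => by have := (mem_bounces.mp hi).2.1; omega
  have hshift : ∑ i ∈ bounces (u ++ [x]), (u.length + 1 - i) = bounce u := by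
    rw [bounces_append_singleton x hu]
    split_ifs
    · rw [Finset.sum_insert (length_succ_notMem_bounces u), Nat.sub_self, zero_add, hold]
    · exact hold
  rw [← hshift, bounce, Finset.card_eq_sum_ones, ← Finset.sum_add_distrib, List.length_append,
    List.length_singleton]

end Bounce

structure PsiInvariant (u v : List ℕ) : Prop where
  isAreaSeq : IsAreaSeq v
  maxVal_eq : maxVal v = (bounces u).card
  card_Maxb : (Maxb v).card = bseq u u.length + 1
  card_Maxa_add : (Maxa v).card + bseq u u.length = get1 u u.length
  bounce_eq : bounce u = area v

lemma psiInvariant_singleton_zero : PsiInvariant [0] [0] where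
  isAreaSeq := ⟨fun _ => rfl, fun i hi1 hi2 => by simp at hi2; omega⟩
  maxVal_eq := by decide
  card_Maxb := by decide
  card_Maxa_add := by decide
  bounce_eq := by decide

lemma PsiInvariant.append_singleton {u v : List ℕ} {a : ℕ} (h : PsiInvariant u v)
    (hu : u ≠ []) (ha : a ≤ get1 u u.length + 1) :
    PsiInvariant (u ++ [a]) (ins v (admPos v a)) := by
  obtain ⟨hv_seq, hmax, hMaxb, hMaxa, hbounce_eq⟩ := h
  have hv : v ≠ [] := by
    rintro rfl
    simp [Maxb] at hMaxb
  have hseq := isAreaSeq_ins hv_seq (admPos_le_length v a)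
  have hB := bseq_append_singleton_length a hu
  have hcard := card_bounces_append_singleton a hu
  have hbounce := bounce_append_singleton a hu
  have harea := area_ins v (admPos v a)
  have hmaxVal := maxVal_ins v (admPos v a)
  have hlen : (u ++ [a]).length = u.length + 1 := by simp
  have hlast := get1_append_singleton_length u a
  by_cases hnew : bseq u u.length + 1 ≤ a
  · obtain ⟨hx, hMaxa'⟩ :=
      ins_admPos_of_card_Maxb_le (a := a) hv_seq hv (by omega) (by omega)
    have hMaxb' := card_Maxb_ins_of_insLetter_eq hx
    rw [if_pos hnew] at hB hcard
    exact ⟨hseq, by omega, by rw [hlen]; omega, by rw [hlen, hlast]; omega, by omega⟩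
  · obtain ⟨hx, hMaxa'⟩ := ins_admPos_of_lt_card_Maxb (a := a) hv (by omega)
    have hMaxb' := card_Maxb_ins_of_insLetter_eq_succ hx
    rw [if_neg hnew] at hB hcard
    exact ⟨hseq, by omega, by rw [hlen]; omega, by rw [hlen, hlast]; omega, by omega⟩

lemma psi_append_singleton (u : List ℕ) (a : ℕ) :
    psi (u ++ [a]) = ins (psi u) (admPos (psi u) a) := by
  simp [psi, psiRev, admPos]

theorem psiInvariant {u : List ℕ} (hu : u ≠ []) (h : IsAreaSeq u) : PsiInvariant u (psi u) := by
  induction u using List.reverseRecOn with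
  | nil => contradiction
  | append_singleton u a ih =>
    rcases eq_or_ne u [] with rfl | hne
    · obtain rfl : a = 0 := by simpa [get1] using h.1 (by simp)
      exact psiInvariant_singleton_zero
    · rw [psi_append_singleton]
      exact (ih hne h.of_append_singleton).append_singleton hne (h.le_succ_of_append_singleton hne)

/-- For every area sequence `w`, `bounce w = area (ψ w)`. -/
theorem bounce_eq_area_psi (w : List ℕ) (hw : IsAreaSeq w) :
    bounce w = area (psi w) := by
  rcases eq_or_ne w [] with rfl | hne
  · rfl
  · exact (psiInvariant hne hw).bounce_eq
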